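/- If ω is strongly almost periodic and the letter a occurs in ω, then the a-split sequence s_a(ω) is strongly almost periodic. -/
import Mathlib


/-- The factor of `ω` starting at `i` of length `n`. -/
def seg {α : Type*} (ω : ℕ → α) (i n : ℕ) : List α :=
  (List.range n).map (fun k => ω (i + k))

/-- `x` occurs in `ω` at position `i`. -/
def OccursAt {α : Type*} (ω : ℕ → α) (x : List α) (i : ℕ) : Prop :=
  seg ω i x.length = x

/-- Strongly almost periodic: every factor occurs in every sufficiently long factor. -/
def SAP {α : Type*} (ω : ℕ → α) : Prop :=
  ∀ x : List α, (∃ i, OccursAt ω x i) →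
    ∃ l, ∀ j, ∃ i, j ≤ i ∧ i + x.length ≤ j + l ∧ OccursAt ω x i

/-- Almost periodic: every factor occurring infinitely often occurs in every
sufficiently long factor. -/
def AP {α : Type*} (ω : ℕ → α) : Prop :=
  ∀ x : List α, {i | OccursAt ω x i}.Infinite →
    ∃ l, ∀ j, ∃ i, j ≤ i ∧ i + x.length ≤ j + l ∧ OccursAt ω x i

/-- Eventually strongly almost periodic: some suffix is strongly almost periodic. -/
def EAP {α : Type*} (ω : ℕ → α) : Prop :=
  ∃ n, SAP (fun i => ω (n + i))

lemma seg_length {α : Type*} (ω : ℕ → α) (i n : ℕ) : (seg ω i n).length = n := by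
  simp [seg]

lemma seg_getElem {α : Type*} (ω : ℕ → α) (i n t : ℕ) (ht : t < n) :
    (seg ω i n)[t]'(by simpa [seg_length] using ht) = ω (i + t) := by
  simp [seg]

lemma occursAt_seg {α : Type*} (ω : ℕ → α) (i n : ℕ) : OccursAt ω (seg ω i n) i := by
  simp [OccursAt, seg_length]

lemma occursAt_iff {α : Type*} (ω : ℕ → α) (x : List α) (i : ℕ) :
    OccursAt ω x i ↔ ∀ t (ht : t < x.length), ω (i + t) = x[t] := by
  constructor
  · intro hh t ht
    rw [List.getElem_of_eq hh.symm ht]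
    simp [seg]
  · intro h
    apply List.ext_getElem (by simp [seg_length])
    intro t h1 h2
    rw [seg_getElem ω i x.length t (by simpa [seg_length] using h1)]
    exact h t h2

lemma seg_congr {α : Type*} (ω : ℕ → α) (i i' n : ℕ)
    (h : ∀ u, u < n → ω (i + u) = ω (i' + u)) : seg ω i n = seg ω i' n := by
  apply List.ext_getElem (by simp [seg_length])
  intro t h1 h2
  rw [seg_getElem ω i n t (by simpa [seg_length] using h1),
    seg_getElem ω i' n t (by simpa [seg_length] using h1)]
  exact h t (by simpa [seg_length] using h1)

lemma strictMono_diff {p : ℕ → ℕ} (hp : StrictMono p) {j m : ℕ} (h : j ≤ m) :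
    m + p j ≤ j + p m := by
  induction m, h using Nat.le_induction with
  | base => omega
  | succ m hm ih => have := hp (show m < m + 1 by omega); omega

/-- If `ω` is strongly almost periodic and `a` occurs in `ω`, then the `a`-split of
`ω` is strongly almost periodic. Here `p` enumerates (in increasing order) all the
positions of `a` in `ω`, and the `a`-split is the sequence of blocks
`ω[p k + 1, p (k+1)]`, each ending with `a` and containing no other occurrence of `a`. -/
theorem sap_split {Sig : Type*} [Finite Sig] (ω : ℕ → Sig) (a : Sig) (h : SAP ω)
    (p : ℕ → ℕ) (hmono : StrictMono p)
    (hp : ∀ k, ω (p k) = a) (hall : ∀ i, ω i = a → ∃ k, p k = i) :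
    SAP (fun k => seg ω (p k + 1) (p (k + 1) - p k)) := by
  set s : ℕ → List Sig := fun k => seg ω (p k + 1) (p (k + 1) - p k) with hs
  have gap : ∀ q i, ω i = a → p q ≤ i → i < p (q + 1) → i = p q := by
    intro q i hia h1 h2
    obtain ⟨r, hr⟩ := hall i hia
    subst hr
    have hq : q ≤ r := hmono.le_iff_le.mp h1
    have hq' : r < q + 1 := hmono.lt_iff_lt.mp h2
    have : r = q := by omega
    rw [this]
  intro x hx
  obtain ⟨k, hk⟩ := hx
  set n := x.length with hn
  set W := seg ω (p k) (p (k + n) - p k + 1) with hW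
  obtain ⟨l, hl⟩ := h W ⟨p k, occursAt_seg ω _ _⟩
  refine ⟨l + n, ?_⟩
  intro j
  obtain ⟨i, hji, hil, hocc⟩ := hl (p j)
  have hWlen : W.length = p (k + n) - p k + 1 := seg_length _ _ _
  have htrans : ∀ d, d ≤ p (k + n) - p k → ω (i + d) = ω (p k + d) := by
    intro d hd
    have h1 := (occursAt_iff ω W i).mp hocc d (by omega)
    rw [h1]
    exact seg_getElem ω (p k) (p (k + n) - p k + 1) d (by omega)
  have pk_le : ∀ t, p k ≤ p (k + t) := fun t => hmono.monotone (by omega)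
  have hia : ω i = a := by
    have := htrans 0 (Nat.zero_le _)
    simpa [hp k] using this
  obtain ⟨m, hm⟩ := hall i hia
  subst hm
  have hjm : j ≤ m := hmono.le_iff_le.mp hji
  have claimC : ∀ t, t ≤ n → p (m + t) = p m + (p (k + t) - p k) := by
    intro t
    induction t with
    | zero => intro _; simp
    | succ t ih =>
      intro ht
      have ih' := ih (by omega)
      have e1 : p (m + (t + 1)) = p (m + t + 1) := rfl
      have e2 : p (k + (t + 1)) = p (k + t + 1) := rfl
      have hdd' : p (k + t) < p (k + t + 1) := hmono (by omega)
      have hkt := pk_le t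
      have hkt1 : p k ≤ p (k + t + 1) := e2 ▸ pk_le (t + 1)
      have hd'le : p (k + t + 1) - p k ≤ p (k + n) - p k := by
        have := hmono.monotone (show k + t + 1 ≤ k + n by omega)
        omega
      have ha' : ω (p m + (p (k + t + 1) - p k)) = a := by
        rw [htrans _ hd'le]
        have heq : p k + (p (k + t + 1) - p k) = p (k + t + 1) := by omega
        rw [heq]; exact hp _
      obtain ⟨r, hr⟩ := hall _ ha'
      have hrm : m + t < r := by
        apply hmono.lt_iff_lt.mp
        rw [hr, ih']
        omega
      have hub : p (m + t + 1) ≤ p m + (p (k + t + 1) - p k) := by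
        rw [← hr]
        exact hmono.monotone (by omega)
      have hlow : p m + (p (k + t) - p k) < p (m + t + 1) := by
        rw [← ih']; exact hmono (by omega)
      set e := p (m + t + 1) - p m with he
      have hpm : p m ≤ p (m + t + 1) := hmono.monotone (by omega)
      rcases eq_or_lt_of_le (show e ≤ p (k + t + 1) - p k by omega) with hcase | hcase
      · omega
      · exfalso
        have hae : ω (p k + e) = a := by
          rw [← htrans e (by omega)]
          have heq : p m + e = p (m + t + 1) := by omega
          rw [heq]; exact hp _
        have := gap (k + t) (p k + e) hae (by omega) (by omega)
        omega
  have blocks : ∀ t, t < n → s (m + t) = s (k + t) := by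
    intro t ht
    have hC := claimC t (by omega)
    have hC1 := claimC (t + 1) (by omega)
    have e1 : p (m + (t + 1)) = p (m + t + 1) := rfl
    have e2 : p (k + (t + 1)) = p (k + t + 1) := rfl
    have hkt := pk_le t
    have hkt1 : p k ≤ p (k + t + 1) := e2 ▸ pk_le (t + 1)
    have hmono1 : p (k + t) < p (k + t + 1) := hmono (by omega)
    have hmono2 : p (k + t + 1) ≤ p (k + n) := hmono.monotone (by omega)
    have hkk : p k ≤ p (k + n) := pk_le n
    have hlen : p (m + t + 1) - p (m + t) = p (k + t + 1) - p (k + t) := by omega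
    show seg ω (p (m + t) + 1) (p (m + t + 1) - p (m + t)) =
      seg ω (p (k + t) + 1) (p (k + t + 1) - p (k + t))
    rw [hlen]
    apply seg_congr
    intro u hu
    have h1 : p (m + t) + 1 + u = p m + ((p (k + t) - p k) + 1 + u) := by omega
    have h2 : p (k + t) + 1 + u = p k + ((p (k + t) - p k) + 1 + u) := by omega
    rw [h1, h2]
    exact htrans _ (by omega)
  refine ⟨m, hjm, ?_, ?_⟩
  · have hdiff := strictMono_diff hmono hjm
    omega
  · rw [occursAt_iff]
    intro t ht
    have := (occursAt_iff (fun k => s k) x k).mp hk t ht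
    show s (m + t) = x[t]
    rw [blocks t (by omega)]
    exact this
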